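/- (Upper bound in Theorem 2.) λ_0 ≤ δ^{-1}, where δ = sup_{j∈T\{0}} μ(T_j) φ_j with φ_j = Σ_{k∈P(j)} 1/(μ_k q_{kk*}) and μ(T_j) = Σ_{k∈T_j} μ_k. -/

import Mathlib

open Finset
open scoped Classical

structure BDTree (V : Type*) [Fintype V] where
  root : V
  parent : V → V
  layer : V → ℕ
  q : V → V → ℝ
  parent_root : parent root = root
  layer_root : layer root = 0
  layer_parent : ∀ i, i ≠ root → layer i = layer (parent i) + 1
  reach : ∀ i, ∃ n, parent^[n] i = root
  q_pos_up : ∀ i, i ≠ root → 0 < q i (parent i)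
  q_pos_down : ∀ i, i ≠ root → 0 < q (parent i) i

namespace BDTree

variable {V : Type*} [Fintype V] (T : BDTree V)

/-- The set of sons of a vertex. -/
noncomputable def sons (i : V) : Finset V :=
  Finset.univ.filter fun j => j ≠ T.root ∧ T.parent j = i

/-- The subtree `T_k` rooted at `k` (including `k`). -/
noncomputable def subtree (k : V) : Finset V :=
  Finset.univ.filter fun j => ∃ n, T.parent^[n] j = k

/-- The path set `P(i)`: vertices (excluding the root) on the path from `i` to the root. -/
noncomputable def pathSet (i : V) : Finset V :=
  Finset.univ.filter fun k => k ≠ T.root ∧ ∃ n, T.parent^[n] i = k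

/-- The symmetric measure `μ`. -/
noncomputable def mu (k : V) : ℝ :=
  ∏ j ∈ T.pathSet k, T.q (T.parent j) j / T.q j (T.parent j)

/-- The operator `Ω`. -/
noncomputable def Omega (g : V → ℝ) (i : V) : ℝ :=
  (∑ j ∈ T.sons i, T.q i j * (g j - g i)) + T.q i (T.parent i) * (g (T.parent i) - g i)

/-- The set of non-root vertices `T \ {0}`. -/
noncomputable def nonroot : Finset V := Finset.univ.filter fun i => i ≠ T.root

/-- The Dirichlet form `D(f)`. -/
noncomputable def D (f : V → ℝ) : ℝ :=
  ∑ i ∈ T.nonroot, T.mu i * T.q i (T.parent i) * (f i - f (T.parent i)) ^ 2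

/-- `μ(f²)`. -/
noncomputable def norm2 (f : V → ℝ) : ℝ := ∑ i ∈ T.nonroot, T.mu i * f i ^ 2

/-- The principal Dirichlet eigenvalue `λ₀`, via the classical variational formula. -/
noncomputable def lam0 : ℝ := sInf {r | ∃ f : V → ℝ, f T.root = 0 ∧ T.norm2 f = 1 ∧ r = T.D f}

/-- The single-summation operator `I`. -/
noncomputable def opI (f : V → ℝ) (i : V) : ℝ :=
  (∑ j ∈ T.subtree i, T.mu j * f j) /
    (T.mu i * T.q i (T.parent i) * (f i - f (T.parent i)))

/-- The double-summation operator `II`. -/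
noncomputable def opII (f : V → ℝ) (i : V) : ℝ :=
  (∑ k ∈ T.pathSet i, (1 / (T.mu k * T.q k (T.parent k))) *
      ∑ j ∈ T.subtree k, T.mu j * f j) / f i

/-- The difference-form operator `R`; at a son of the root the convention `w_0 = ∞`,
`1/∞ = 0` is used, i.e. the term `w i⁻¹` is replaced by `0`. -/
noncomputable def R (w : V → ℝ) (i : V) : ℝ :=
  T.q i (T.parent i) * (1 - (if T.parent i = T.root then 0 else (w i)⁻¹)) +
    ∑ j ∈ T.sons i, T.q i j * (1 - w j)

/-- Membership in the test-function class `W = {w : w > 1, w_0 = ∞}` (the value at a son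
of the root plays the role of `∞` and is not used by `R`). -/
def memW (w : V → ℝ) : Prop := ∀ i, i ≠ T.root → T.parent i ≠ T.root → 1 < w i

/-- `φ_j = Σ_{k∈P(j)} 1/(μ_k q_{kk*})`. -/
noncomputable def phi (j : V) : ℝ :=
  ∑ k ∈ T.pathSet j, 1 / (T.mu k * T.q k (T.parent k))

end BDTree


/-!
Test the variational formula for `λ₀` with the potential `f` of a unit current flowing from `i₀`
to the root: `f` rises by the resistance `1/(μ_k q_{kk*})` across each edge of `P(i₀)` and is
constant across all other edges. Then `D(f) = φ_{i₀}`, and `f ≡ φ_{i₀}` on `T_{i₀}` gives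
`μ(f²) ≥ μ(T_{i₀}) φ_{i₀}²`, so `λ₀ ≤ D(f)/μ(f²) ≤ (μ(T_{i₀}) φ_{i₀})⁻¹`. Taking `i₀` to maximize
`μ(T_j) φ_j` gives the bound.
-/

namespace BDTree

variable {V : Type*} [Fintype V] (T : BDTree V)

@[simp]
lemma mem_nonroot {i : V} : i ∈ T.nonroot ↔ i ≠ T.root := by simp [nonroot]

@[simp]
lemma mem_pathSet {k i : V} : k ∈ T.pathSet i ↔ k ≠ T.root ∧ ∃ n, T.parent^[n] i = k := by
  simp [pathSet]

@[simp]
lemma mem_subtree {j k : V} : j ∈ T.subtree k ↔ ∃ n, T.parent^[n] j = k := by simp [subtree]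

lemma iterate_parent_root (n : ℕ) : T.parent^[n] T.root = T.root :=
  Function.iterate_fixed T.parent_root n

lemma layer_parent_le (j : V) : T.layer (T.parent j) ≤ T.layer j := by
  by_cases h : j = T.root
  · rw [h, T.parent_root]
  · rw [T.layer_parent j h]; omega

lemma layer_iterate_parent_le (n : ℕ) (j : V) : T.layer (T.parent^[n] j) ≤ T.layer j := by
  induction n with
  | zero => rfl
  | succ n ih =>
    rw [Function.iterate_succ_apply']
    exact (T.layer_parent_le _).trans ih

lemma pathSet_root : T.pathSet T.root = ∅ := by
  ext k
  simp only [mem_pathSet, iterate_parent_root, Finset.notMem_empty, iff_false, not_and]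
  rintro hk ⟨-, rfl⟩
  exact hk rfl

lemma self_mem_pathSet {i : V} (hi : i ≠ T.root) : i ∈ T.pathSet i :=
  T.mem_pathSet.2 ⟨hi, 0, rfl⟩

lemma notMem_pathSet_parent {i : V} (hi : i ≠ T.root) : i ∉ T.pathSet (T.parent i) := by
  intro h
  obtain ⟨-, n, hn⟩ := T.mem_pathSet.1 h
  have := T.layer_iterate_parent_le n (T.parent i)
  rw [hn, T.layer_parent i hi] at this
  omega

lemma pathSet_eq_insert_parent {i : V} (hi : i ≠ T.root) :
    T.pathSet i = insert i (T.pathSet (T.parent i)) := by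
  ext k
  simp only [mem_pathSet, Finset.mem_insert]
  constructor
  · rintro ⟨hk, _ | n, hn⟩
    · exact Or.inl hn.symm
    · exact Or.inr ⟨hk, n, hn⟩
  · rintro (rfl | ⟨hk, n, hn⟩)
    · exact ⟨hi, 0, rfl⟩
    · exact ⟨hk, n + 1, hn⟩

lemma pathSet_subset_nonroot (i : V) : T.pathSet i ⊆ T.nonroot := fun _ hk =>
  T.mem_nonroot.2 (T.mem_pathSet.1 hk).1

lemma subtree_subset_nonroot {k : V} (hk : k ≠ T.root) : T.subtree k ⊆ T.nonroot := by
  intro j hj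
  obtain ⟨n, hn⟩ := T.mem_subtree.1 hj
  rw [mem_nonroot]
  rintro rfl
  exact hk (by simpa only [iterate_parent_root] using hn.symm)

lemma pathSet_subset_of_mem_subtree {j k : V} (hj : j ∈ T.subtree k) :
    T.pathSet k ⊆ T.pathSet j := by
  obtain ⟨m, hm⟩ := T.mem_subtree.1 hj
  intro x hx
  obtain ⟨hx, n, hn⟩ := T.mem_pathSet.1 hx
  exact T.mem_pathSet.2 ⟨hx, n + m, by rw [Function.iterate_add_apply, hm, hn]⟩

lemma mu_pos (k : V) : 0 < T.mu k :=
  Finset.prod_pos fun j hj =>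
    have hj : j ≠ T.root := (T.mem_pathSet.1 hj).1
    div_pos (T.q_pos_down j hj) (T.q_pos_up j hj)

lemma D_nonneg (f : V → ℝ) : 0 ≤ T.D f :=
  Finset.sum_nonneg fun i hi =>
    mul_nonneg (mul_nonneg (T.mu_pos i).le (T.q_pos_up i (T.mem_nonroot.1 hi)).le) (sq_nonneg _)

lemma D_const_mul (c : ℝ) (f : V → ℝ) : T.D (fun i => c * f i) = c ^ 2 * T.D f := by
  simp only [D, Finset.mul_sum]
  exact Finset.sum_congr rfl fun _ _ => by ring

lemma norm2_const_mul (c : ℝ) (f : V → ℝ) : T.norm2 (fun i => c * f i) = c ^ 2 * T.norm2 f := by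
  simp only [norm2, Finset.mul_sum]
  exact Finset.sum_congr rfl fun _ _ => by ring

lemma lam0_le_D_div_norm2 {f : V → ℝ} (hf : f T.root = 0) (hpos : 0 < T.norm2 f) :
    T.lam0 ≤ T.D f / T.norm2 f := by
  set c := (Real.sqrt (T.norm2 f))⁻¹
  have hc : c ^ 2 = (T.norm2 f)⁻¹ := by rw [inv_pow, Real.sq_sqrt hpos.le]
  have hbdd : BddBelow {r | ∃ f : V → ℝ, f T.root = 0 ∧ T.norm2 f = 1 ∧ r = T.D f} :=
    ⟨0, by rintro r ⟨g, -, -, rfl⟩; exact T.D_nonneg g⟩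
  refine csInf_le hbdd ⟨fun i => c * f i, by simp [hf], ?_, ?_⟩
  · rw [norm2_const_mul, hc, inv_mul_cancel₀ hpos.ne']
  · rw [D_const_mul, hc, div_eq_inv_mul]

noncomputable def resistance (k : V) : ℝ := 1 / (T.mu k * T.q k (T.parent k))

lemma phi_eq_sum_resistance (j : V) : T.phi j = ∑ k ∈ T.pathSet j, T.resistance k := rfl

lemma resistance_pos {k : V} (hk : k ≠ T.root) : 0 < T.resistance k :=
  one_div_pos.2 (mul_pos (T.mu_pos k) (T.q_pos_up k hk))

lemma mu_mul_q_mul_resistance_sq {k : V} (hk : k ≠ T.root) :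
    T.mu k * T.q k (T.parent k) * T.resistance k ^ 2 = T.resistance k := by
  have := (mul_pos (T.mu_pos k) (T.q_pos_up k hk)).ne'
  rw [resistance]
  field_simp

lemma phi_pos {i : V} (hi : i ≠ T.root) : 0 < T.phi i :=
  Finset.sum_pos (fun _ hk => T.resistance_pos (T.mem_pathSet.1 hk).1)
    ⟨i, T.self_mem_pathSet hi⟩

noncomputable def unitCurrentPotential (i₀ i : V) : ℝ :=
  ∑ k ∈ T.pathSet i ∩ T.pathSet i₀, T.resistance k

variable {T}

lemma unitCurrentPotential_root (i₀ : V) : T.unitCurrentPotential i₀ T.root = 0 := by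
  simp [unitCurrentPotential, pathSet_root]

lemma unitCurrentPotential_sub_parent (i₀ : V) {i : V} (hi : i ≠ T.root) :
    T.unitCurrentPotential i₀ i - T.unitCurrentPotential i₀ (T.parent i) =
      if i ∈ T.pathSet i₀ then T.resistance i else 0 := by
  have hi' : i ∉ T.pathSet (T.parent i) ∩ T.pathSet i₀ :=
    fun h => T.notMem_pathSet_parent hi (Finset.mem_inter.1 h).1
  simp only [unitCurrentPotential, T.pathSet_eq_insert_parent hi]
  split_ifs with h
  · rw [Finset.insert_inter_of_mem h, Finset.sum_insert hi', add_sub_cancel_right]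
  · rw [Finset.insert_inter_of_notMem h, sub_self]

lemma D_unitCurrentPotential (i₀ : V) : T.D (T.unitCurrentPotential i₀) = T.phi i₀ := by
  have hterm : ∀ i ∈ T.nonroot, T.mu i * T.q i (T.parent i) *
      (T.unitCurrentPotential i₀ i - T.unitCurrentPotential i₀ (T.parent i)) ^ 2 =
      if i ∈ T.pathSet i₀ then T.resistance i else 0 := by
    intro i hi
    have hi := T.mem_nonroot.1 hi
    rw [unitCurrentPotential_sub_parent i₀ hi]
    split_ifs
    · exact T.mu_mul_q_mul_resistance_sq hi
    · ring
  rw [D, Finset.sum_congr rfl hterm, Finset.sum_ite_mem,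
    Finset.inter_eq_right.2 (T.pathSet_subset_nonroot i₀), phi_eq_sum_resistance]

lemma unitCurrentPotential_of_mem_subtree {i₀ j : V} (hj : j ∈ T.subtree i₀) :
    T.unitCurrentPotential i₀ j = T.phi i₀ := by
  rw [unitCurrentPotential, Finset.inter_eq_right.2 (T.pathSet_subset_of_mem_subtree hj),
    phi_eq_sum_resistance]

lemma subtree_mass_mul_phi_sq_le_norm2 {i₀ : V} (hi₀ : i₀ ≠ T.root) :
    (∑ k ∈ T.subtree i₀, T.mu k) * T.phi i₀ ^ 2 ≤ T.norm2 (T.unitCurrentPotential i₀) :=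
  calc (∑ k ∈ T.subtree i₀, T.mu k) * T.phi i₀ ^ 2
      = ∑ k ∈ T.subtree i₀, T.mu k * T.unitCurrentPotential i₀ k ^ 2 := by
        rw [Finset.sum_mul]
        exact Finset.sum_congr rfl fun k hk => by rw [unitCurrentPotential_of_mem_subtree hk]
    _ ≤ T.norm2 (T.unitCurrentPotential i₀) :=
        Finset.sum_le_sum_of_subset_of_nonneg (T.subtree_subset_nonroot hi₀)
          fun k _ _ => mul_nonneg (T.mu_pos k).le (sq_nonneg _)

lemma lam0_le_inv_subtree_mass_mul_phi {i₀ : V} (hi₀ : i₀ ≠ T.root) :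
    T.lam0 ≤ ((∑ k ∈ T.subtree i₀, T.mu k) * T.phi i₀)⁻¹ := by
  have hmass : 0 < ∑ k ∈ T.subtree i₀, T.mu k :=
    Finset.sum_pos (fun k _ => T.mu_pos k) ⟨i₀, T.mem_subtree.2 ⟨0, rfl⟩⟩
  have hphi := T.phi_pos hi₀
  have hnorm := subtree_mass_mul_phi_sq_le_norm2 hi₀
  calc T.lam0
      ≤ T.D (T.unitCurrentPotential i₀) / T.norm2 (T.unitCurrentPotential i₀) :=
        T.lam0_le_D_div_norm2 (unitCurrentPotential_root i₀) (hnorm.trans_lt' (by positivity))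
    _ ≤ T.phi i₀ / ((∑ k ∈ T.subtree i₀, T.mu k) * T.phi i₀ ^ 2) := by
        rw [D_unitCurrentPotential]
        gcongr
    _ = ((∑ k ∈ T.subtree i₀, T.mu k) * T.phi i₀)⁻¹ := by
        field_simp

end BDTree

/-- the upper bound `λ₀ ≤ δ⁻¹` with `δ = sup_j μ(T_j) φ_j`. -/
theorem stmt13 {V : Type*} [Fintype V] (T : BDTree V) (hne : T.nonroot.Nonempty) :
    T.lam0 ≤ (T.nonroot.sup' hne fun j => (∑ k ∈ T.subtree j, T.mu k) * T.phi j)⁻¹ := by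
  obtain ⟨i₀, hi₀, hmax⟩ :=
    Finset.exists_mem_eq_sup' hne fun j => (∑ k ∈ T.subtree j, T.mu k) * T.phi j
  rw [hmax]
  exact T.lam0_le_inv_subtree_mass_mul_phi (T.mem_nonroot.1 hi₀)
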